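/- arXiv:1103.0830 — 3 statements merged into one kernel-verified Lean document; each statement's English description precedes it below -/
import Mathlib

section
/- Let δ ∈ (0,1) and define a : (0, 1/2] → ℝ by a(x) = 2 + sin((−ln x)^δ). Then for every ε > 0 there exists ρ ∈ (0, 1/2) such that for all x, y ∈ (0, 1/2] satisfying |x − y| ≤ min(x, y) and min(x, y) ≤ ρ, one has |a(x) − a(y)| ≤ ε. -/
open Real Filter

lemma sin_lip (a b : ℝ) : |Real.sin a - Real.sin b| ≤ |a - b| := by
  rw [Real.sin_sub_sin, abs_mul, abs_mul, abs_two]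
  have h1 : |Real.sin ((a - b) / 2)| ≤ |(a - b) / 2| := Real.abs_sin_le_abs
  have h2 : |Real.cos ((a + b) / 2)| ≤ 1 := Real.abs_cos_le_one _
  have h3 : |(a - b) / 2| = |a - b| / 2 := by rw [abs_div, abs_two]
  nlinarith [abs_nonneg (Real.sin ((a - b) / 2)), abs_nonneg (a - b),
    abs_nonneg (Real.cos ((a + b) / 2))]

lemma rpow_diff_le (δ s t T : ℝ) (hδ0 : 0 < δ) (hδ1 : δ < 1) (hT : 1 ≤ T)
    (hs : T ≤ s) (hst : s ≤ t) (hts : t - s ≤ Real.log 2) :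
    t ^ δ - s ^ δ ≤ δ * T ^ (δ - 1) * Real.log 2 := by
  have hs0 : (0 : ℝ) < s := lt_of_lt_of_le zero_lt_one (hT.trans hs)
  have ht0 : (0 : ℝ) < t := hs0.trans_le hst
  have hu : (0 : ℝ) ≤ (t - s) / s := div_nonneg (by linarith) hs0.le
  have hb : (1 + (t - s) / s) ^ δ ≤ 1 + δ * ((t - s) / s) :=
    rpow_one_add_le_one_add_mul_self (by linarith) hδ0.le hδ1.le
  have hts' : t = s * (1 + (t - s) / s) := by field_simp; ring
  have h1 : t ^ δ ≤ s ^ δ * (1 + δ * ((t - s) / s)) := by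
    calc t ^ δ = (s * (1 + (t - s) / s)) ^ δ := by rw [← hts']
    _ = s ^ δ * (1 + (t - s) / s) ^ δ := Real.mul_rpow hs0.le (by linarith)
    _ ≤ s ^ δ * (1 + δ * ((t - s) / s)) :=
        mul_le_mul_of_nonneg_left hb (Real.rpow_nonneg hs0.le δ)
  have h2 : t ^ δ - s ^ δ ≤ δ * s ^ (δ - 1) * (t - s) := by
    have hsδ : s ^ δ / s = s ^ (δ - 1) := by
      rw [Real.rpow_sub hs0, Real.rpow_one]
    calc t ^ δ - s ^ δ ≤ s ^ δ * (1 + δ * ((t - s) / s)) - s ^ δ := by linarith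
    _ = δ * (s ^ δ / s) * (t - s) := by ring
    _ = δ * s ^ (δ - 1) * (t - s) := by rw [hsδ]
  have h3 : s ^ (δ - 1) ≤ T ^ (δ - 1) :=
    Real.rpow_le_rpow_of_nonpos (by linarith) hs (by linarith)
  have h4 : δ * s ^ (δ - 1) * (t - s) ≤ δ * T ^ (δ - 1) * Real.log 2 := by
    have hts0 : 0 ≤ t - s := by linarith
    have : δ * s ^ (δ - 1) * (t - s) ≤ δ * T ^ (δ - 1) * (t - s) := by
      apply mul_le_mul_of_nonneg_right _ hts0
      exact mul_le_mul_of_nonneg_left h3 hδ0.le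
    refine this.trans ?_
    apply mul_le_mul_of_nonneg_left hts
    positivity
  linarith

lemma stmt_10_main (δ : ℝ) (hδ : δ ∈ Set.Ioo (0 : ℝ) 1) (ε : ℝ) (hε : 0 < ε)
    (T : ℝ) (hT : 1 ≤ T) (hTe : δ * T ^ (δ - 1) * Real.log 2 ≤ ε)
    (ρ : ℝ) (hρ : ρ ≤ Real.exp (-(T + Real.log 2)))
    (x y : ℝ) (hx : x ∈ Set.Ioc (0 : ℝ) (1 / 2)) (hy : y ∈ Set.Ioc (0 : ℝ) (1 / 2))
    (hxy : x ≤ y) (hd : |x - y| ≤ min x y) (hm : min x y ≤ ρ) :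
    |(2 + Real.sin ((-Real.log x) ^ δ)) - (2 + Real.sin ((-Real.log y) ^ δ))| ≤ ε := by
  obtain ⟨hδ0, hδ1⟩ := hδ
  have hx0 := hx.1
  have hy0 := hy.1
  rw [min_eq_left hxy] at hd hm
  have hy2x : y ≤ 2 * x := by
    rw [abs_sub_comm, abs_of_nonneg (by linarith)] at hd; linarith
  set s := -Real.log y with hs_def
  set t := -Real.log x with ht_def
  have hst : s ≤ t := by
    have := Real.log_le_log hx0 hxy
    simp only [hs_def, ht_def]; linarith
  have hxρ : Real.log x ≤ -(T + Real.log 2) := by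
    calc Real.log x ≤ Real.log ρ := Real.log_le_log hx0 hm
    _ ≤ -(T + Real.log 2) := by
        have := Real.log_le_log (hx0.trans_le hm) hρ
        rwa [Real.log_exp] at this
  have htT : T + Real.log 2 ≤ t := by simp only [ht_def]; linarith
  have hts : t - s ≤ Real.log 2 := by
    have h2x : Real.log y ≤ Real.log (2 * x) := Real.log_le_log hy0 hy2x
    rw [Real.log_mul two_ne_zero hx0.ne'] at h2x
    simp only [hs_def, ht_def]; linarith
  have hsT : T ≤ s := by linarith
  have key : t ^ δ - s ^ δ ≤ δ * T ^ (δ - 1) * Real.log 2 :=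
    rpow_diff_le δ s t T hδ0 hδ1 hT hsT hst hts
  have hnn : 0 ≤ t ^ δ - s ^ δ := by
    have : s ^ δ ≤ t ^ δ := Real.rpow_le_rpow (by linarith [Real.log_nonneg (le_refl (1:ℝ))]; ) hst hδ0.le
    linarith
  calc |(2 + Real.sin (t ^ δ)) - (2 + Real.sin (s ^ δ))|
      = |Real.sin (t ^ δ) - Real.sin (s ^ δ)| := by ring_nf
    _ ≤ |t ^ δ - s ^ δ| := sin_lip _ _
    _ = t ^ δ - s ^ δ := abs_of_nonneg hnn
    _ ≤ δ * T ^ (δ - 1) * Real.log 2 := key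
    _ ≤ ε := hTe

/-- for `δ ∈ (0,1)`, the function `a(x) = 2 + sin((−ln x)^δ)` on `(0, 1/2]`
has vanishing oscillation near `0` over pairs of points whose distance is at most their
minimum. -/
theorem stmt_10 (δ : ℝ) (hδ : δ ∈ Set.Ioo (0 : ℝ) 1) :
    ∀ ε > (0 : ℝ), ∃ ρ ∈ Set.Ioo (0 : ℝ) (1 / 2), ∀ x y : ℝ,
      x ∈ Set.Ioc (0 : ℝ) (1 / 2) → y ∈ Set.Ioc (0 : ℝ) (1 / 2) →
      |x - y| ≤ min x y → min x y ≤ ρ →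
      |(2 + Real.sin ((-Real.log x) ^ δ)) - (2 + Real.sin ((-Real.log y) ^ δ))| ≤ ε := by
  intro ε hε
  obtain ⟨hδ0, hδ1⟩ := hδ
  -- find T
  have hlog2 : (0 : ℝ) < Real.log 2 := Real.log_pos one_lt_two
  have htend : Tendsto (fun s : ℝ => s ^ (δ - 1)) atTop (nhds 0) := by
    have := tendsto_rpow_neg_atTop (y := 1 - δ) (by linarith)
    simpa [neg_sub] using this
  have hev : ∀ᶠ s in atTop, s ^ (δ - 1) < ε / (δ * Real.log 2) :=
    htend.eventually_lt_const (by positivity)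
  obtain ⟨T, hT1, hTb⟩ := ((eventually_ge_atTop (1 : ℝ)).and hev).exists
  have hTe : δ * T ^ (δ - 1) * Real.log 2 ≤ ε := by
    have : T ^ (δ - 1) ≤ ε / (δ * Real.log 2) := hTb.le
    calc δ * T ^ (δ - 1) * Real.log 2 ≤ δ * (ε / (δ * Real.log 2)) * Real.log 2 := by
          apply mul_le_mul_of_nonneg_right _ hlog2.le
          exact mul_le_mul_of_nonneg_left this hδ0.le
      _ = ε := by field_simp
  refine ⟨min (1 / 4) (Real.exp (-(T + Real.log 2))), ⟨by positivity, by
    calc min (1/4 : ℝ) _ ≤ 1/4 := min_le_left _ _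
      _ < 1/2 := by norm_num⟩, ?_⟩
  intro x y hx hy hd hm
  have hρ' : min (1/4 : ℝ) (Real.exp (-(T + Real.log 2))) ≤ Real.exp (-(T + Real.log 2)) :=
    min_le_right _ _
  rcases le_total x y with hxy | hxy
  · exact stmt_10_main δ ⟨hδ0, hδ1⟩ ε hε T hT1 hTe _ hρ' x y hx hy hxy hd hm
  · rw [abs_sub_comm]
    rw [abs_sub_comm, min_comm] at hd
    rw [min_comm] at hm
    exact stmt_10_main δ ⟨hδ0, hδ1⟩ ε hε T hT1 hTe _ hρ' y x hy hx hxy hd hm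
end

section
/- Let d ≥ 1, let φ ∈ C^∞(ℝ^d) be nonnegative with support contained in the ball B_{1/2}(0) and with ∫_{ℝ^d} φ(z) dz = 1, and let σ : ℝ^d_+ → ℝ be a bounded measurable function. Define σ̄(x) = ∫_{ℝ^d} σ(y) (x¹)^{−d} φ((x − y)/x¹) dy for x ∈ ℝ^d_+. Then σ̄ is differentiable in the x¹-direction on ℝ^d_+, and for every x ∈ ℝ^d_+ one has x¹ ∂₁σ̄(x) = ∫_{|z| ≤ 1/2} σ(x − x¹z) [ −d·φ(z) + ∇φ(z)·(e₁ − z) ] dz, where e₁ = (1,0,…,0); consequently x¹ |∂₁σ̄(x)| ≤ N·sup_{ℝ^d_+}|σ| for a constant N depending only on d and φ. -/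
open MeasureTheory

/-- The boundary-adapted mollification `σ̄(x) = ∫ σ(y) (x¹)^{−d} φ((x−y)/x¹) dy`. -/
noncomputable def mollify (d : ℕ) (hd : 0 < d)
    (φ σ : EuclideanSpace ℝ (Fin d) → ℝ) (x : EuclideanSpace ℝ (Fin d)) : ℝ :=
  ∫ y, σ y * ((x ⟨0, hd⟩) ^ d)⁻¹ * φ ((x ⟨0, hd⟩)⁻¹ • (x - y))

lemma coord_abs_le_norm {d : ℕ} (z : EuclideanSpace ℝ (Fin d)) (i : Fin d) : |z i| ≤ ‖z‖ := by
  have := norm_inner_le_norm (𝕜 := ℝ) (EuclideanSpace.single i (1:ℝ)) z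
  simpa [EuclideanSpace.inner_single_left, EuclideanSpace.norm_single] using this

lemma integral_comp_sub_left' {d : ℕ} (f : EuclideanSpace ℝ (Fin d) → ℝ)
    (x : EuclideanSpace ℝ (Fin d)) : ∫ y, f (x - y) = ∫ y, f y := by
  simp only [sub_eq_add_neg]
  rw [integral_neg_eq_self (fun w => f (x + w)) volume, integral_add_left_eq_self]

set_option maxHeartbeats 2000000 in
/-- for a mollifier `φ` supported in `B_{1/2}(0)` with unit integral and a
bounded measurable `σ` on the half-space, the mollification `σ̄` is differentiable in the
`x¹`-direction on `ℝ^d_+`, with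
`x¹ ∂₁σ̄(x) = ∫_{|z|≤1/2} σ(x − x¹z) (−d φ(z) + ∇φ(z)·(e₁ − z)) dz`, and
`x¹ |∂₁σ̄(x)| ≤ N sup|σ|` where `N` depends only on `d` and `φ`. -/
theorem stmt_12 (d : ℕ) (hd : 0 < d)
    (φ : EuclideanSpace ℝ (Fin d) → ℝ) (hφ : ContDiff ℝ (⊤ : ℕ∞) φ)
    (hφ0 : ∀ z, 0 ≤ φ z)
    (hφsupp : tsupport φ ⊆ Metric.ball (0 : EuclideanSpace ℝ (Fin d)) (1 / 2))
    (hφint : ∫ z, φ z = 1) :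
    ∃ N : ℝ, ∀ (σ : EuclideanSpace ℝ (Fin d) → ℝ) (M : ℝ), Measurable σ →
      (∀ x : EuclideanSpace ℝ (Fin d), 0 < x ⟨0, hd⟩ → |σ x| ≤ M) →
      ∀ x : EuclideanSpace ℝ (Fin d), 0 < x ⟨0, hd⟩ →
        LineDifferentiableAt ℝ (mollify d hd φ σ) x
            (EuclideanSpace.single (⟨0, hd⟩ : Fin d) 1) ∧
        x ⟨0, hd⟩ *
            lineDeriv ℝ (mollify d hd φ σ) x (EuclideanSpace.single (⟨0, hd⟩ : Fin d) 1)
          = ∫ z in Metric.closedBall (0 : EuclideanSpace ℝ (Fin d)) (1 / 2),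
              σ (x - (x ⟨0, hd⟩) • z) *
                (-(d : ℝ) * φ z +
                  fderiv ℝ φ z (EuclideanSpace.single (⟨0, hd⟩ : Fin d) 1 - z)) ∧
        x ⟨0, hd⟩ *
            |lineDeriv ℝ (mollify d hd φ σ) x (EuclideanSpace.single (⟨0, hd⟩ : Fin d) 1)|
          ≤ N * M := by
  classical
  obtain ⟨k, rfl⟩ : ∃ k, d = k + 1 := ⟨d - 1, (Nat.succ_pred_eq_of_pos hd).symm⟩
  set i0 : Fin (k+1) := ⟨0, hd⟩ with hi0
  set e1 : EuclideanSpace ℝ (Fin (k+1)) := EuclideanSpace.single i0 1 with he1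
  have hne1 : ‖e1‖ = 1 := by simp [he1, EuclideanSpace.norm_single]
  clear_value i0 e1
  have hφc : HasCompactSupport φ :=
    HasCompactSupport.of_support_subset_isCompact (isCompact_closedBall 0 (1/2))
      ((Function.support_subset_iff'.2 fun z hz =>
        image_eq_zero_of_notMem_tsupport fun h => hz (Metric.ball_subset_closedBall (hφsupp h))))
  obtain ⟨Cφ, hCφ⟩ := hφc.exists_bound_of_continuous hφ.continuous
  have hfdc : Continuous (fderiv ℝ φ) := hφ.continuous_fderiv (by simp)
  obtain ⟨Cφ', hCφ'⟩ := (hφc.fderiv (𝕜 := ℝ)).exists_bound_of_continuous hfdc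
  have hCφ0 : 0 ≤ Cφ := le_trans (norm_nonneg _) (hCφ 0)
  have hCφ'0 : 0 ≤ Cφ' := le_trans (norm_nonneg _) (hCφ' 0)
  set cb := Metric.closedBall (0 : EuclideanSpace ℝ (Fin (k+1))) (1/2) with hcb
  clear_value cb
  -- vanishing outside the ball
  have hzero : ∀ z : EuclideanSpace ℝ (Fin (k+1)), z ∉ Metric.ball (0 : EuclideanSpace ℝ (Fin (k+1))) (1/2) →
      φ z = 0 ∧ fderiv ℝ φ z = 0 := by
    intro z hz
    constructor
    · exact image_eq_zero_of_notMem_tsupport fun h => hz (hφsupp h)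
    · by_contra h
      exact hz (hφsupp (support_fderiv_subset ℝ (Function.mem_support.2 h)))
  refine ⟨(((k+1) : ℝ) * Cφ + (3/2) * Cφ') * (volume cb).toReal, ?_⟩
  intro σ M hσ hM x hx
  set t := x i0 with htdef
  have ht : 0 < t := hx
  clear_value t
  have ht' : t ≠ 0 := ne_of_gt ht
  have hM0 : 0 ≤ M := le_trans (abs_nonneg _) (hM x (htdef ▸ hx))
  -- the kernel and its derivative
  set c : ℝ → EuclideanSpace ℝ (Fin (k+1)) → EuclideanSpace ℝ (Fin (k+1)) :=
    fun s y => (t + s)⁻¹ • (x - y + s • e1) with hcdef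
  set F : ℝ → EuclideanSpace ℝ (Fin (k+1)) → ℝ :=
    fun s y => σ y * (((t + s) ^ (k+1))⁻¹ * φ (c s y)) with hFdef
  set F' : ℝ → EuclideanSpace ℝ (Fin (k+1)) → ℝ := fun s y =>
    σ y * ((-(((k+1) : ℝ) * (t + s) ^ k * 1) / ((t + s) ^ (k+1)) ^ 2) * φ (c s y)
      + ((t + s) ^ (k+1))⁻¹ *
          (fderiv ℝ φ (c s y)) ((t + s)⁻¹ • e1 + (-1 / (t + s) ^ 2) • (x - y + s • e1)))
    with hF'def
  clear_value c F F'
  -- geometry of the support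
  have hgeo : ∀ s ∈ Metric.ball (0:ℝ) (t/2), ∀ y : EuclideanSpace ℝ (Fin (k+1)),
      c s y ∈ Metric.ball (0 : EuclideanSpace ℝ (Fin (k+1))) (1/2) →
      ‖x - y + s • e1‖ ≤ (t + s)/2 ∧ y ∈ Metric.closedBall x (2*t) ∧ |σ y| ≤ M := by
    intro s hs y hzb
    have hs' : |s| < t/2 := by rwa [Metric.mem_ball, Real.dist_eq, sub_zero] at hs
    obtain ⟨hs1, hs2⟩ := abs_lt.1 hs'
    have hτ0 : 0 < t + s := by linarith
    have hz12 : ‖c s y‖ < 1/2 := by simpa [Metric.mem_ball] using hzb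
    have hv : x - y + s • e1 = (t + s) • c s y := by
      rw [hcdef]; exact (smul_inv_smul₀ (ne_of_gt hτ0) _).symm
    have hvn : ‖x - y + s • e1‖ ≤ (t + s)/2 := by
      rw [hv, norm_smul, Real.norm_eq_abs, abs_of_pos hτ0]
      nlinarith [norm_nonneg (c s y)]
    refine ⟨hvn, ?_, ?_⟩
    · rw [Metric.mem_closedBall, dist_eq_norm]
      have : y - x = -(x - y + s • e1) + s • e1 := by abel
      rw [this]
      calc ‖-(x - y + s • e1) + s • e1‖ ≤ ‖-(x - y + s • e1)‖ + ‖s • e1‖ := norm_add_le _ _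
        _ = ‖x - y + s • e1‖ + |s| * ‖e1‖ := by rw [norm_neg, norm_smul, Real.norm_eq_abs]
        _ ≤ 2 * t := by rw [hne1]; nlinarith
    · apply hM
      have hco : x i0 - y i0 + s = (t + s) * (c s y) i0 := by
        have h := congrArg (fun w : EuclideanSpace ℝ (Fin (k+1)) => w i0) hv
        simpa [he1, EuclideanSpace.single_apply] using h
      have hzc : |(c s y) i0| ≤ ‖c s y‖ := coord_abs_le_norm _ _
      have h1 : (c s y) i0 ≤ |(c s y) i0| := le_abs_self _
      have h2 : -(|(c s y) i0|) ≤ (c s y) i0 := neg_abs_le _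
      show 0 < y i0
      nlinarith [htdef]
  set Cb : ℝ := ((k:ℝ)+1) * ((t/2)^(k+2))⁻¹ * Cφ + ((t/2)^(k+1))⁻¹ * (3/t) * Cφ' with hCbdef
  clear_value Cb
  have ht2 : (0:ℝ) < t/2 := half_pos ht
  have hCb0 : 0 ≤ Cb := by
    rw [hCbdef]
    apply add_nonneg
    · exact mul_nonneg (mul_nonneg (by positivity) (inv_nonneg.2 (pow_nonneg ht2.le _))) hCφ0
    · exact mul_nonneg (mul_nonneg (inv_nonneg.2 (pow_nonneg ht2.le _)) (by positivity)) hCφ'0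
  -- bound on F'
  have hboundF' : ∀ y : EuclideanSpace ℝ (Fin (k+1)), ∀ s ∈ Metric.ball (0:ℝ) (t/2),
      ‖F' s y‖ ≤ (Metric.closedBall x (2*t)).indicator (fun _ => M * Cb) y := by
    intro y s hs
    have hs' : |s| < t/2 := by rwa [Metric.mem_ball, Real.dist_eq, sub_zero] at hs
    obtain ⟨hs1, hs2⟩ := abs_lt.1 hs'
    have hτ0 : 0 < t + s := by linarith
    have hτl : t/2 ≤ t + s := by linarith
    by_cases hzb : c s y ∈ Metric.ball (0 : EuclideanSpace ℝ (Fin (k+1))) (1/2)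
    · obtain ⟨hvn, hy2t, hσy⟩ := hgeo s hs y hzb
      rw [Set.indicator_of_mem hy2t]
      have hz12 : ‖c s y‖ < 1/2 := by simpa [Metric.mem_ball] using hzb
      have hA' : |(-(((k:ℝ)+1) * (t + s) ^ k * 1) / ((t + s) ^ (k+1)) ^ 2)|
          ≤ ((k:ℝ)+1) * ((t/2)^(k+2))⁻¹ := by
        have he : (-(((k:ℝ)+1) * (t + s) ^ k * 1) / ((t + s) ^ (k+1)) ^ 2)
            = -(((k:ℝ)+1) * ((t+s)^(k+2))⁻¹) := by
          field_simp
          ring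
        rw [he, abs_neg, abs_of_nonneg (by positivity)]
        gcongr
      have harg : ‖(t + s)⁻¹ • e1 + (-1 / (t + s) ^ 2) • (x - y + s • e1)‖ ≤ 3 / t := by
        calc ‖(t + s)⁻¹ • e1 + (-1 / (t + s) ^ 2) • (x - y + s • e1)‖
            ≤ ‖(t + s)⁻¹ • e1‖ + ‖(-1 / (t + s) ^ 2) • (x - y + s • e1)‖ := norm_add_le _ _
          _ = (t+s)⁻¹ * 1 + (1/(t+s)^2) * ‖x - y + s • e1‖ := by
              rw [norm_smul, norm_smul, Real.norm_eq_abs, Real.norm_eq_abs, hne1,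
                abs_of_pos (inv_pos.2 hτ0),
                abs_of_neg (div_neg_of_neg_of_pos (by norm_num) (pow_pos hτ0 2))]
              ring
          _ ≤ (t+s)⁻¹ * 1 + (1/(t+s)^2) * ((t+s)/2) := by gcongr
          _ = (3/2) * (t+s)⁻¹ := by field_simp; try ring
          _ ≤ (3/2) * (t/2)⁻¹ := by gcongr <;> try positivity
          _ = 3 / t := by field_simp; try ring
      have hL : |(fderiv ℝ φ (c s y)) ((t + s)⁻¹ • e1 + (-1 / (t + s) ^ 2) • (x - y + s • e1))|
          ≤ Cφ' * (3/t) := by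
        calc |(fderiv ℝ φ (c s y)) _| ≤ ‖fderiv ℝ φ (c s y)‖ * ‖(t + s)⁻¹ • e1 + (-1 / (t + s) ^ 2) • (x - y + s • e1)‖ :=
              (fderiv ℝ φ (c s y)).le_opNorm _
          _ ≤ Cφ' * (3/t) := by gcongr <;> first | exact hCφ' _ | positivity
      have hA : |((t + s) ^ (k+1))⁻¹| ≤ ((t/2)^(k+1))⁻¹ := by
        rw [abs_of_nonneg (by positivity)]
        gcongr
      calc ‖F' s y‖ = |σ y| * |(-(((k:ℝ)+1) * (t + s) ^ k * 1) / ((t + s) ^ (k+1)) ^ 2) * φ (c s y)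
              + ((t + s) ^ (k+1))⁻¹ * (fderiv ℝ φ (c s y)) ((t + s)⁻¹ • e1 + (-1 / (t + s) ^ 2) • (x - y + s • e1))| := by
            rw [hF'def]; exact abs_mul _ _
        _ ≤ M * Cb := by
            rw [hCbdef]
            have hφb : |φ (c s y)| ≤ Cφ := hCφ _
            have h2 := abs_add_le ((-(((k:ℝ)+1) * (t + s) ^ k * 1) / ((t + s) ^ (k+1)) ^ 2) * φ (c s y))
              (((t + s) ^ (k+1))⁻¹ * (fderiv ℝ φ (c s y)) ((t + s)⁻¹ • e1 + (-1 / (t + s) ^ 2) • (x - y + s • e1)))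
            rw [abs_mul, abs_mul] at h2
            have t1 : |(-(((k:ℝ)+1) * (t + s) ^ k * 1) / ((t + s) ^ (k+1)) ^ 2)| * |φ (c s y)|
                ≤ (((k:ℝ)+1) * ((t/2)^(k+2))⁻¹) * Cφ := by
              apply mul_le_mul hA' hφb (abs_nonneg _) (by positivity)
            have t2 : |((t + s) ^ (k+1))⁻¹| * |(fderiv ℝ φ (c s y)) ((t + s)⁻¹ • e1 + (-1 / (t + s) ^ 2) • (x - y + s • e1))|
                ≤ ((t/2)^(k+1))⁻¹ * (Cφ' * (3/t)) := by
              apply mul_le_mul hA hL (abs_nonneg _) (by positivity)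
            calc |σ y| * _ ≤ M * ((((k:ℝ)+1) * ((t/2)^(k+2))⁻¹) * Cφ + ((t/2)^(k+1))⁻¹ * (Cφ' * (3/t))) := by
                  apply mul_le_mul hσy (h2.trans (add_le_add t1 t2)) (abs_nonneg _) hM0
              _ = M * (((k:ℝ)+1) * ((t/2)^(k+2))⁻¹ * Cφ + ((t/2)^(k+1))⁻¹ * (3/t) * Cφ') := by ring
    · obtain ⟨hp0, hp1⟩ := hzero _ hzb
      have : F' s y = 0 := by
        rw [hF'def]
        simp [hp0, hp1]
      rw [this, norm_zero]
      exact Set.indicator_nonneg (fun _ _ => by positivity) y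
  -- bound on F 0
  have hbound0 : ∀ y : EuclideanSpace ℝ (Fin (k+1)),
      ‖F 0 y‖ ≤ (Metric.closedBall x (2*t)).indicator (fun _ => M * (((t/2)^(k+1))⁻¹ * Cφ)) y := by
    intro y
    have h0b : (0:ℝ) ∈ Metric.ball (0:ℝ) (t/2) := by
      simp [Metric.mem_ball, ht2]
    by_cases hzb : c 0 y ∈ Metric.ball (0 : EuclideanSpace ℝ (Fin (k+1))) (1/2)
    · obtain ⟨hvn, hy2t, hσy⟩ := hgeo 0 h0b y hzb
      rw [Set.indicator_of_mem hy2t]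
      have hA : |((t + 0) ^ (k+1))⁻¹| ≤ ((t/2)^(k+1))⁻¹ := by
        rw [abs_of_nonneg (by positivity)]
        gcongr
        linarith
      calc ‖F 0 y‖ = |σ y| * (|((t + 0) ^ (k+1))⁻¹| * |φ (c 0 y)|) := by
            simp only [hFdef, Real.norm_eq_abs, abs_mul]
        _ ≤ M * (((t/2)^(k+1))⁻¹ * Cφ) := by
            apply mul_le_mul hσy _ (by positivity) hM0
            apply mul_le_mul hA (hCφ _) (abs_nonneg _) (by positivity)
    · obtain ⟨hp0, -⟩ := hzero _ hzb
      have : F 0 y = 0 := by rw [hFdef]; simp [hp0]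
      rw [this, norm_zero]
      exact Set.indicator_nonneg (fun _ _ => by positivity) y
  -- integrability of the indicator bounds
  have hindint : ∀ C : ℝ, Integrable ((Metric.closedBall x (2*t)).indicator (fun _ => C)) volume := by
    intro C
    rw [integrable_indicator_iff measurableSet_closedBall]
    exact integrableOn_const measure_closedBall_lt_top.ne
  -- measurability
  have hccont : ∀ s : ℝ, Continuous (fun y : EuclideanSpace ℝ (Fin (k+1)) => c s y) := by
    intro s
    rw [hcdef]
    fun_prop
  have hFmeas : ∀ s : ℝ, AEStronglyMeasurable (F s) volume := by
    intro s
    apply Measurable.aestronglyMeasurable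
    rw [hFdef]
    exact hσ.mul ((continuous_const.mul (hφ.continuous.comp (hccont s))).measurable)
  have hF'meas : AEStronglyMeasurable (F' 0) volume := by
    apply Measurable.aestronglyMeasurable
    rw [hF'def]
    apply hσ.mul
    apply Measurable.add
    · exact (continuous_const.mul (hφ.continuous.comp (hccont 0))).measurable
    · apply Continuous.measurable
      apply continuous_const.mul
      apply Continuous.clm_apply (hfdc.comp (hccont 0))
      exact continuous_const.add (by fun_prop)
  -- differentiability in s
  have hdiff : ∀ y : EuclideanSpace ℝ (Fin (k+1)), ∀ s ∈ Metric.ball (0:ℝ) (t/2),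
      HasDerivAt (fun s => F s y) (F' s y) s := by
    intro y s hs
    have hs' : |s| < t/2 := by rwa [Metric.mem_ball, Real.dist_eq, sub_zero] at hs
    obtain ⟨hs1, hs2⟩ := abs_lt.1 hs'
    have hτ0 : 0 < t + s := by linarith
    have h1 : HasDerivAt (fun s : ℝ => t + s) 1 s := by
      simpa using (hasDerivAt_id s).const_add t
    have h3 := (h1.pow (k+1)).inv (pow_pos hτ0 _).ne'
    have h5 : HasDerivAt (fun s : ℝ => x - y + s • e1) e1 s := by
      simpa using ((hasDerivAt_id s).smul_const e1).const_add (x - y)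
    have h4 := h1.inv (ne_of_gt hτ0)
    have h6 := h4.smul h5
    have h7 : HasFDerivAt φ (fderiv ℝ φ ((t+s)⁻¹ • (x - y + s • e1))) ((t+s)⁻¹ • (x - y + s • e1)) :=
      ((hφ.differentiable (by simp)) _).hasFDerivAt
    have h8 := h7.comp_hasDerivAt s h6
    have h9 := (h3.mul h8).const_mul (σ y)
    rw [hFdef, hF'def, hcdef]
    simp only [Function.comp, Nat.add_sub_cancel, Nat.cast_add, Nat.cast_one] at h9
    exact h9
  -- differentiate under the integral sign
  obtain ⟨-, hderiv⟩ :=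
    hasDerivAt_integral_of_dominated_loc_of_deriv_le (μ := volume) (F := F) (F' := F')
      (x₀ := (0:ℝ)) (bound := (Metric.closedBall x (2*t)).indicator (fun _ => M * Cb)) (Metric.ball_mem_nhds 0 ht2)
      (Filter.Eventually.of_forall hFmeas)
      ((hindint _).mono' (hFmeas 0) (Filter.Eventually.of_forall hbound0))
      hF'meas
      (Filter.Eventually.of_forall fun y => hboundF' y)
      (hindint _)
      (Filter.Eventually.of_forall fun y => hdiff y)
  have hcoord : ∀ s : ℝ, (x + s • e1) (⟨0, hd⟩ : Fin (k+1)) = t + s := by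
    intro s
    have h00 : (⟨0, hd⟩ : Fin (k+1)) = 0 := by ext; simp
    simp only [he1, hi0, htdef, EuclideanSpace.single_apply, h00, PiLp.add_apply,
      PiLp.smul_apply, smul_eq_mul]
    simp
  have key : (fun s : ℝ => mollify (k+1) hd φ σ (x + s • e1)) = fun s => ∫ y, F s y := by
    funext s
    show (∫ y, σ y * (((x + s • e1) (⟨0, hd⟩ : Fin (k+1))) ^ (k+1))⁻¹ *
        φ ((((x + s • e1) (⟨0, hd⟩ : Fin (k+1))))⁻¹ • (x + s • e1 - y))) = _
    congr 1
    funext y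
    have harg : x + s • e1 - y = x - y + s • e1 := by abel
    rw [hcoord s, harg, mul_assoc, hFdef, hcdef]
  have hline : HasLineDerivAt ℝ (mollify (k+1) hd φ σ) (∫ y, F' 0 y) x e1 := by
    show HasDerivAt (fun s : ℝ => mollify (k+1) hd φ σ (x + s • e1)) (∫ y, F' 0 y) 0
    rw [key]
    exact hderiv
  -- the limit integrand in nice form
  set g : EuclideanSpace ℝ (Fin (k+1)) → ℝ :=
    fun z => σ (x - t • z) * (-((k:ℝ)+1) * φ z + fderiv ℝ φ z (e1 - z)) with hgdef
  clear_value g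
  have hstep : ∀ y : EuclideanSpace ℝ (Fin (k+1)), F' 0 y = (t^(k+2))⁻¹ * g (t⁻¹ • (x - y)) := by
    intro y
    rw [hF'def, hgdef, hcdef]
    simp only [zero_smul, add_zero]
    have harg : (t)⁻¹ • e1 + (-1 / t ^ 2) • (x - y) = t⁻¹ • (e1 - t⁻¹ • (x - y)) := by
      conv_rhs => rw [smul_sub, smul_smul, sub_eq_add_neg, ← neg_smul]
      congr 2
      ring
    rw [harg, (fderiv ℝ φ (t⁻¹ • (x - y))).map_smul, smul_eq_mul]
    have hσ' : σ (x - t • (t⁻¹ • (x - y))) = σ y := by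
      rw [smul_inv_smul₀ ht', sub_sub_cancel]
    rw [hσ']
    field_simp
    ring
  have hint1 : (∫ y, F' 0 y) = (t^(k+2))⁻¹ * ∫ y, g (t⁻¹ • (x - y)) := by
    simp_rw [hstep]
    exact integral_const_mul _ _
  have hint2 : (∫ y, g (t⁻¹ • (x - y))) = ∫ w, g (t⁻¹ • w) :=
    integral_comp_sub_left' (fun w => g (t⁻¹ • w)) x
  have hint3 : (∫ w, g (t⁻¹ • w)) = t^(k+1) * ∫ z, g z := by
    rw [MeasureTheory.Measure.integral_comp_smul volume g t⁻¹, finrank_euclideanSpace_fin,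
      inv_pow, inv_inv, abs_of_pos (by positivity), smul_eq_mul]
  have hvanish : ∀ z, z ∉ cb → g z = 0 := by
    intro z hz
    have hz' : z ∉ Metric.ball (0 : EuclideanSpace ℝ (Fin (k+1))) (1/2) := fun h =>
      hz (hcb ▸ Metric.ball_subset_closedBall h)
    obtain ⟨h1, h2⟩ := hzero z hz'
    rw [hgdef]
    simp [h1, h2]
  have hint4 : (∫ z, g z) = ∫ z in cb, g z :=
    (setIntegral_eq_integral_of_forall_compl_eq_zero hvanish).symm
  have heq : t * (∫ y, F' 0 y) = ∫ z in cb, g z := by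
    rw [hint1, hint2, hint3, ← hint4]
    field_simp
    ring
  -- the pointwise bound on g
  have hgb : ∀ z ∈ cb, ‖g z‖ ≤ M * (((k:ℝ)+1) * Cφ + (3/2) * Cφ') := by
    intro z hz
    have hz' : ‖z‖ ≤ 1/2 := by
      rw [hcb] at hz
      simpa [dist_zero_right] using Metric.mem_closedBall.1 hz
    have hzi : |z i0| ≤ 1/2 := (coord_abs_le_norm z i0).trans hz'
    have hpos : 0 < (x - t • z) i0 := by
      have hco : (x - t • z) i0 = t - t * z i0 := by
        simp [htdef]
      rw [hco]
      have h1 : z i0 ≤ 1/2 := (le_abs_self _).trans hzi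
      nlinarith
    have hσb : |σ (x - t • z)| ≤ M := hM _ hpos
    have hLb : |fderiv ℝ φ z (e1 - z)| ≤ Cφ' * (3/2) := by
      calc |fderiv ℝ φ z (e1 - z)| ≤ ‖fderiv ℝ φ z‖ * ‖e1 - z‖ := (fderiv ℝ φ z).le_opNorm _
        _ ≤ Cφ' * (3/2) := by
            apply mul_le_mul (hCφ' _) _ (norm_nonneg _) hCφ'0
            calc ‖e1 - z‖ ≤ ‖e1‖ + ‖z‖ := norm_sub_le _ _
              _ ≤ 3/2 := by rw [hne1]; linarith
    have hib : |(-((k:ℝ)+1) * φ z + fderiv ℝ φ z (e1 - z))| ≤ ((k:ℝ)+1) * Cφ + (3/2) * Cφ' := by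
      calc |(-((k:ℝ)+1) * φ z + fderiv ℝ φ z (e1 - z))|
          ≤ |(-((k:ℝ)+1)) * φ z| + |fderiv ℝ φ z (e1 - z)| := abs_add_le _ _
        _ ≤ ((k:ℝ)+1) * Cφ + (3/2) * Cφ' := by
            apply add_le_add
            · rw [abs_mul, abs_neg, abs_of_nonneg (by positivity)]
              exact mul_le_mul_of_nonneg_left (hCφ _) (by positivity)
            · linarith [hLb]
    calc ‖g z‖ = |σ (x - t • z)| * |(-((k:ℝ)+1) * φ z + fderiv ℝ φ z (e1 - z))| := by
          rw [hgdef, Real.norm_eq_abs, abs_mul]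
      _ ≤ M * (((k:ℝ)+1) * Cφ + (3/2) * Cφ') :=
          mul_le_mul hσb hib (abs_nonneg _) hM0
  refine ⟨hline.lineDifferentiableAt, ?_, ?_⟩
  · rw [hline.lineDeriv, heq, hgdef]
    push_cast
    rfl
  · rw [hline.lineDeriv]
    have habs : t * |∫ y, F' 0 y| = ‖∫ z in cb, g z‖ := by
      rw [Real.norm_eq_abs, ← heq, abs_mul, abs_of_pos ht]
    rw [habs]
    calc ‖∫ z in cb, g z‖ ≤ (M * (((k:ℝ)+1) * Cφ + (3/2) * Cφ')) * (volume cb).toReal := by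
          apply norm_setIntegral_le_of_norm_le_const _ hgb
          · rw [hcb]; exact measure_closedBall_lt_top
      _ = (((k:ℝ)+1) * Cφ + (3/2) * Cφ') * (volume cb).toReal * M := by ring
      _ = _ := by push_cast; ring
end

section
/- Let 𝒪 ⊂ ℝ^d be a bounded open set, let N₀ ≥ 1, and let ψ : 𝒪 → (0, ∞) be infinitely differentiable with N₀^{−1} dist(x, ∂𝒪) ≤ ψ(x) ≤ N₀ dist(x, ∂𝒪) for all x ∈ 𝒪 and sup_{x ∈ 𝒪} ψ(x)^{|β|} |D^β(∇ψ)(x)| ≤ C_{|β|} < ∞ for every multi-index β. Let ζ ∈ C_c^∞((0, ∞)) and for n ∈ ℤ define ζ_n(x) = ζ(e^n ψ(x)) for x ∈ 𝒪. Then each ζ_n belongs to C_c^∞(𝒪) (its support is a compact subset of 𝒪), and for every multi-index α with |α| = m ≥ 0 there is a constant N(m), depending only on m, ζ, N₀ and the constants C_j for j < m, but not on n, such that |D^α ζ_n(x)| ≤ N(m) e^{mn} for all x ∈ 𝒪 and all n ∈ ℤ. -/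
open MeasureTheory

/-- The partial derivative `∂_i f` of a real-valued function on `ℝ^d`. -/
noncomputable def pderiv' {d : ℕ} (i : Fin d) (f : EuclideanSpace ℝ (Fin d) → ℝ) :
    EuclideanSpace ℝ (Fin d) → ℝ :=
  fun x => fderiv ℝ f x (EuclideanSpace.single i 1)

/-- The multi-index derivative `D^α f = ∂₁^{α₁} ⋯ ∂_d^{α_d} f`. -/
noncomputable def multiDeriv {d : ℕ} (α : Fin d → ℕ) (f : EuclideanSpace ℝ (Fin d) → ℝ) :
    EuclideanSpace ℝ (Fin d) → ℝ :=
  (List.finRange d).foldr (fun i g => (pderiv' i)^[α i] g) f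

/-- The function `ζ_n(x) = ζ(e^n ψ(x))` on `𝒪`, extended by zero outside `𝒪`. -/
noncomputable def zetaN {d : ℕ} (O : Set (EuclideanSpace ℝ (Fin d)))
    (ψ : EuclideanSpace ℝ (Fin d) → ℝ) (ζ : ℝ → ℝ) (n : ℤ) :
    EuclideanSpace ℝ (Fin d) → ℝ :=
  O.indicator fun x => ζ (Real.exp n * ψ x)

namespace Stmt16

noncomputable def pfold {d : ℕ} (l : List (Fin d)) (f : EuclideanSpace ℝ (Fin d) → ℝ) :
    EuclideanSpace ℝ (Fin d) → ℝ :=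
  l.foldr (fun i g => pderiv' i g) f

variable {d : ℕ} {O : Set (EuclideanSpace ℝ (Fin d))}

@[simp] lemma pfold_nil (f : EuclideanSpace ℝ (Fin d) → ℝ) : pfold [] f = f := rfl

@[simp] lemma pfold_cons (i : Fin d) (l : List (Fin d)) (f : EuclideanSpace ℝ (Fin d) → ℝ) :
    pfold (i :: l) f = pderiv' i (pfold l f) := rfl

lemma pfold_append (l₁ l₂ : List (Fin d)) (f : EuclideanSpace ℝ (Fin d) → ℝ) :
    pfold (l₁ ++ l₂) f = pfold l₁ (pfold l₂ f) :=
  List.foldr_append ..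

lemma pfold_replicate (k : ℕ) (i : Fin d) (f : EuclideanSpace ℝ (Fin d) → ℝ) :
    pfold (List.replicate k i) f = (pderiv' i)^[k] f := by
  induction k with
  | zero => rfl
  | succ k ih =>
    rw [List.replicate_succ, Function.iterate_succ_apply']
    simpa [pfold] using congrArg (pderiv' i) ih

/-- The canonical sorted list associated with a multi-index. -/
def canonList (α : Fin d → ℕ) : List (Fin d) :=
  (List.finRange d).flatMap fun i => List.replicate (α i) i

lemma multiDeriv_eq_pfold (α : Fin d → ℕ) (f : EuclideanSpace ℝ (Fin d) → ℝ) :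
    multiDeriv α f = pfold (canonList α) f := by
  unfold multiDeriv canonList
  induction (List.finRange d) with
  | nil => rfl
  | cons i L ih =>
    rw [List.foldr_cons, List.flatMap_cons, pfold_append, pfold_replicate, ih]

lemma canonList_length (α : Fin d → ℕ) : (canonList α).length = ∑ i, α i := by
  rw [canonList, List.length_flatMap, Fin.sum_univ_def]
  congr 1
  simp [Function.comp]

lemma canonList_count (α : Fin d → ℕ) (a : Fin d) : (canonList α).count a = α a := by
  rw [canonList, List.count_flatMap]
  have : ((List.finRange d).map (List.count a ∘ fun i => List.replicate (α i) i)) =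
      (List.finRange d).map (fun i => if i = a then α i else 0) := by
    apply List.map_congr_left
    intro i _
    simp [Function.comp, List.count_replicate]
  rw [this]
  rw [← Fin.sum_univ_def]
  simp

lemma sorted_canonList (α : Fin d → ℕ) : (canonList α).Pairwise (· ≤ ·) := by
  have h : ∀ (L : List (Fin d)), L.Pairwise (· < ·) →
      (L.flatMap fun i => List.replicate (α i) i).Pairwise (· ≤ ·) := by
    intro L hL
    induction L with
    | nil => simp
    | cons i L ih =>
      rw [List.pairwise_cons] at hL
      rw [List.flatMap_cons]
      rw [List.pairwise_append]
      refine ⟨?_, ih hL.2, ?_⟩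
      · rw [List.pairwise_replicate]; right; exact le_refl i
      · intro a ha b hb
        rw [List.eq_of_mem_replicate ha]
        rw [List.mem_flatMap] at hb
        obtain ⟨j, hj, hbj⟩ := hb
        rw [List.eq_of_mem_replicate hbj]
        exact (hL.1 j hj).le
  exact h _ (List.pairwise_lt_finRange d)

lemma sorted_eq_canonList {s : List (Fin d)} (hs : s.Pairwise (· ≤ ·)) :
    s = canonList (fun i => s.count i) := by
  apply List.Perm.eq_of_pairwise' hs (sorted_canonList _)
  rw [List.perm_iff_count]
  intro a
  rw [canonList_count]

lemma pderiv'_congrOn (hO : IsOpen O) {f g : EuclideanSpace ℝ (Fin d) → ℝ}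
    (h : Set.EqOn f g O) (i : Fin d) : Set.EqOn (pderiv' i f) (pderiv' i g) O := by
  intro x hx
  unfold pderiv'
  rw [Filter.EventuallyEq.fderiv_eq (Filter.eventuallyEq_of_mem (hO.mem_nhds hx) h)]

lemma pfold_congrOn (hO : IsOpen O) {f g : EuclideanSpace ℝ (Fin d) → ℝ}
    (h : Set.EqOn f g O) (l : List (Fin d)) : Set.EqOn (pfold l f) (pfold l g) O := by
  induction l with
  | nil => exact h
  | cons i l ih => exact pderiv'_congrOn hO ih i

lemma pderiv'_zero (i : Fin d) : pderiv' i (fun _ => (0 : ℝ)) = fun _ => 0 := by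
  funext x
  simp [pderiv', fderiv_const]

lemma pfold_zero (l : List (Fin d)) : pfold l (fun _ => (0 : ℝ)) = fun _ => 0 := by
  induction l with
  | nil => rfl
  | cons i l ih => rw [pfold_cons, ih, pderiv'_zero]

lemma pderiv'_contDiffOn (hO : IsOpen O) {f : EuclideanSpace ℝ (Fin d) → ℝ}
    (hf : ContDiffOn ℝ (⊤ : ℕ∞) f O) (i : Fin d) :
    ContDiffOn ℝ (⊤ : ℕ∞) (pderiv' i f) O := by
  have h1 : ContDiffOn ℝ (⊤ : ℕ∞) (fderivWithin ℝ f O) O :=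
    hf.fderivWithin hO.uniqueDiffOn (by simp)
  have h2 : ContDiffOn ℝ (⊤ : ℕ∞) (fun x => fderivWithin ℝ f O x (EuclideanSpace.single i 1)) O :=
    h1.clm_apply contDiffOn_const
  apply h2.congr
  intro x hx
  unfold pderiv'
  rw [fderivWithin_of_isOpen hO hx]

lemma pfold_contDiffOn (hO : IsOpen O) {f : EuclideanSpace ℝ (Fin d) → ℝ}
    (hf : ContDiffOn ℝ (⊤ : ℕ∞) f O) (l : List (Fin d)) :
    ContDiffOn ℝ (⊤ : ℕ∞) (pfold l f) O := by
  induction l with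
  | nil => exact hf
  | cons i l ih => exact pderiv'_contDiffOn hO ih i

lemma differentiableAt_fderiv_of_contDiffOn (hO : IsOpen O) {f : EuclideanSpace ℝ (Fin d) → ℝ}
    (hf : ContDiffOn ℝ (⊤ : ℕ∞) f O) {x : EuclideanSpace ℝ (Fin d)} (hx : x ∈ O) :
    DifferentiableAt ℝ (fderiv ℝ f) x := by
  have h1 : ContDiffOn ℝ (⊤ : ℕ∞) (fderivWithin ℝ f O) O :=
    hf.fderivWithin hO.uniqueDiffOn (by simp)
  have h2 : DifferentiableAt ℝ (fderivWithin ℝ f O) x :=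
    ((h1.differentiableOn (by simp)) x hx).differentiableAt (hO.mem_nhds hx)
  apply h2.congr_of_eventuallyEq
  filter_upwards [hO.eventually_mem hx] with y hy
  exact (fderivWithin_of_isOpen hO hy).symm

lemma pderiv'_swap (hO : IsOpen O) {g : EuclideanSpace ℝ (Fin d) → ℝ}
    (hg : ContDiffOn ℝ (⊤ : ℕ∞) g O) (a b : Fin d) {x : EuclideanSpace ℝ (Fin d)} (hx : x ∈ O) :
    pderiv' a (pderiv' b g) x = pderiv' b (pderiv' a g) x := by
  have hsym : IsSymmSndFDerivAt ℝ g x := by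
    apply (hg.contDiffAt (hO.mem_nhds hx)).isSymmSndFDerivAt
    have : ((2:ℕ∞) : WithTop ℕ∞) ≤ ((⊤:ℕ∞) : WithTop ℕ∞) := WithTop.coe_le_coe.2 le_top
    simpa using this
  have hdiff := differentiableAt_fderiv_of_contDiffOn hO hg hx
  have key : ∀ v w : EuclideanSpace ℝ (Fin d),
      fderiv ℝ (fun y => fderiv ℝ g y w) x v = fderiv ℝ (fderiv ℝ g) x v w := by
    intro v w
    have h1 : HasFDerivAt (fun y => fderiv ℝ g y w)
        ((ContinuousLinearMap.apply ℝ ℝ w).comp (fderiv ℝ (fderiv ℝ g) x)) x :=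
      (ContinuousLinearMap.apply ℝ ℝ w).hasFDerivAt.comp x hdiff.hasFDerivAt
    rw [h1.fderiv]
    rfl
  show fderiv ℝ (fun y => fderiv ℝ g y (EuclideanSpace.single b 1)) x (EuclideanSpace.single a 1)
      = fderiv ℝ (fun y => fderiv ℝ g y (EuclideanSpace.single a 1)) x (EuclideanSpace.single b 1)
  rw [key, key, hsym]

lemma pfold_perm (hO : IsOpen O) {f : EuclideanSpace ℝ (Fin d) → ℝ}
    (hf : ContDiffOn ℝ (⊤ : ℕ∞) f O) {l₁ l₂ : List (Fin d)} (h : l₁.Perm l₂) :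
    Set.EqOn (pfold l₁ f) (pfold l₂ f) O := by
  induction h with
  | nil => exact fun x _ => rfl
  | cons a _ ih => exact pderiv'_congrOn hO ih a
  | swap a b l => exact fun x hx => pderiv'_swap hO (pfold_contDiffOn hO hf l) b a hx
  | trans _ _ ih₁ ih₂ => exact ih₁.trans ih₂

lemma differentiableAt_iteratedFDeriv_of_contDiffOn (hO : IsOpen O)
    {f : EuclideanSpace ℝ (Fin d) → ℝ} (hf : ContDiffOn ℝ (⊤ : ℕ∞) f O) (n : ℕ)
    {x : EuclideanSpace ℝ (Fin d)} (hx : x ∈ O) :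
    DifferentiableAt ℝ (iteratedFDeriv ℝ n f) x := by
  have h1 : DifferentiableAt ℝ (iteratedFDerivWithin ℝ n f O) x :=
    ((hf.differentiableOn_iteratedFDerivWithin (by exact_mod_cast lt_top_iff_ne_top.2 (by simp))
      hO.uniqueDiffOn) x hx).differentiableAt (hO.mem_nhds hx)
  apply h1.congr_of_eventuallyEq
  filter_upwards [hO.eventually_mem hx] with y hy
  exact (iteratedFDerivWithin_of_isOpen n hO hy).symm

lemma iteratedFDeriv_apply_single (hO : IsOpen O) {f : EuclideanSpace ℝ (Fin d) → ℝ}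
    (hf : ContDiffOn ℝ (⊤ : ℕ∞) f O) :
    ∀ (i : ℕ) (j : Fin i → Fin d), ∀ x ∈ O,
      iteratedFDeriv ℝ i f x (fun t => EuclideanSpace.single (j t) 1) =
        pfold (List.ofFn j) f x := by
  intro i
  induction i with
  | zero =>
    intro j x _
    simp [iteratedFDeriv_zero_apply]
  | succ i ih =>
    intro j x hx
    rw [List.ofFn_succ, pfold_cons]
    symm
    have heq : Set.EqOn (pfold (List.ofFn fun t => j t.succ) f)
        (fun y => iteratedFDeriv ℝ i f y (fun t => EuclideanSpace.single (j t.succ) 1)) O :=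
      fun y hy => (ih (fun t => j t.succ) y hy).symm
    show fderiv ℝ (pfold (List.ofFn fun t => j t.succ) f) x (EuclideanSpace.single (j 0) 1) = _
    rw [Filter.EventuallyEq.fderiv_eq (Filter.eventuallyEq_of_mem (hO.mem_nhds hx) heq)]
    have hdiff := differentiableAt_iteratedFDeriv_of_contDiffOn hO hf i hx
    set vs : Fin i → EuclideanSpace ℝ (Fin d) := fun t => EuclideanSpace.single (j t.succ) 1
    have h1 : HasFDerivAt (fun y => iteratedFDeriv ℝ i f y vs)
        ((ContinuousMultilinearMap.apply ℝ (fun _ : Fin i => EuclideanSpace ℝ (Fin d)) ℝ vs).comp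
          (fderiv ℝ (iteratedFDeriv ℝ i f) x)) x :=
      (ContinuousMultilinearMap.apply ℝ _ ℝ vs).hasFDerivAt.comp x hdiff.hasFDerivAt
    rw [h1.fderiv]
    have h2 := iteratedFDeriv_succ_apply_left
      (f := f) (𝕜 := ℝ) (x := x) (n := i)
      (fun t : Fin (i+1) => EuclideanSpace.single (j t) 1)
    rw [h2]
    rfl

lemma pfold_le_norm (hO : IsOpen O) {f : EuclideanSpace ℝ (Fin d) → ℝ}
    (hf : ContDiffOn ℝ (⊤ : ℕ∞) f O) (l : List (Fin d)) {x : EuclideanSpace ℝ (Fin d)}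
    (hx : x ∈ O) : |pfold l f x| ≤ ‖iteratedFDeriv ℝ l.length f x‖ := by
  have h := iteratedFDeriv_apply_single hO hf l.length l.get x hx
  rw [List.ofFn_get] at h
  rw [← h, ← Real.norm_eq_abs]
  calc ‖iteratedFDeriv ℝ l.length f x (fun t => EuclideanSpace.single (l.get t) 1)‖
      ≤ ‖iteratedFDeriv ℝ l.length f x‖ *
          ∏ t : Fin l.length, ‖EuclideanSpace.single (l.get t) (1:ℝ)‖ :=
        (iteratedFDeriv ℝ l.length f x).le_opNorm _
    _ = ‖iteratedFDeriv ℝ l.length f x‖ := by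
        simp [EuclideanSpace.norm_single]

lemma euclid_decomp (v : EuclideanSpace ℝ (Fin d)) :
    v = ∑ j : Fin d, v j • EuclideanSpace.single j (1:ℝ) := by
  ext i
  rw [WithLp.ofLp_sum, Finset.sum_apply]
  simp [EuclideanSpace.single_apply]

lemma coord_le_norm (v : EuclideanSpace ℝ (Fin d)) (j : Fin d) : |v j| ≤ ‖v‖ := by
  have h := abs_real_inner_le_norm (EuclideanSpace.single j (1:ℝ)) v
  rw [EuclideanSpace.inner_single_left] at h
  simpa [EuclideanSpace.norm_single] using h

lemma norm_le_of_entries {k : ℕ}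
    (A : ContinuousMultilinearMap ℝ (fun _ : Fin k => EuclideanSpace ℝ (Fin d)) ℝ)
    {M : ℝ} (hM : 0 ≤ M)
    (h : ∀ j : Fin k → Fin d, |A (fun t => EuclideanSpace.single (j t) 1)| ≤ M) :
    ‖A‖ ≤ (d : ℝ) ^ k * M := by
  rw [ContinuousMultilinearMap.opNorm_le_iff (by positivity)]
  intro v
  have hv : A v = ∑ r : Fin k → Fin d, (∏ t, v t (r t)) •
      A (fun t => EuclideanSpace.single (r t) (1:ℝ)) := by
    calc A v = A (fun t => ∑ j : Fin d, v t j • EuclideanSpace.single j (1:ℝ)) := by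
          congr 1; funext t; exact euclid_decomp (v t)
      _ = ∑ r : Fin k → Fin d, A (fun t => v t (r t) • EuclideanSpace.single (r t) (1:ℝ)) :=
          A.toMultilinearMap.map_sum (fun t j => v t j • EuclideanSpace.single j (1:ℝ))
      _ = ∑ r : Fin k → Fin d, (∏ t, v t (r t)) •
            A (fun t => EuclideanSpace.single (r t) (1:ℝ)) := by
          refine Finset.sum_congr rfl fun r _ => ?_
          exact A.toMultilinearMap.map_smul_univ (fun t => v t (r t)) _
  rw [Real.norm_eq_abs, hv]
  calc |∑ r : Fin k → Fin d, (∏ t, v t (r t)) • A (fun t => EuclideanSpace.single (r t) (1:ℝ))|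
      ≤ ∑ r : Fin k → Fin d, |(∏ t, v t (r t)) • A (fun t => EuclideanSpace.single (r t) (1:ℝ))| :=
        Finset.abs_sum_le_sum_abs _ _
    _ ≤ ∑ r : Fin k → Fin d, (∏ t, |v t (r t)|) * M := by
        refine Finset.sum_le_sum fun r _ => ?_
        rw [smul_eq_mul, abs_mul, Finset.abs_prod]
        exact mul_le_mul_of_nonneg_left (h r) (by positivity)
    _ = (∏ t : Fin k, ∑ j : Fin d, |v t j|) * M := by
        rw [← Finset.sum_mul]
        congr 1
        rw [Finset.prod_univ_sum]
        rfl
    _ ≤ (∏ t : Fin k, (d : ℝ) * ‖v t‖) * M := by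
        refine mul_le_mul_of_nonneg_right (Finset.prod_le_prod ?_ ?_) hM
        · intro t _; positivity
        · intro t _
          calc ∑ j : Fin d, |v t j| ≤ ∑ _j : Fin d, ‖v t‖ :=
                Finset.sum_le_sum fun j _ => coord_le_norm (v t) j
            _ = (d : ℝ) * ‖v t‖ := by simp [mul_comm]
    _ = (d : ℝ) ^ k * M * ∏ t : Fin k, ‖v t‖ := by
        rw [Finset.prod_mul_distrib]
        simp [Finset.prod_const]
        ring

/-- The key entry bound: any (not necessarily sorted) iterated partial derivative
of `ψ` of order `k ≥ 1` is bounded by `C (k-1) * ψ⁻¹ ^ (k-1)`. -/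
lemma entry_bound (hO : IsOpen O) {ψ : EuclideanSpace ℝ (Fin d) → ℝ}
    (hψsmooth : ContDiffOn ℝ (⊤ : ℕ∞) ψ O)
    (hψpos : ∀ x ∈ O, 0 < ψ x) {C : ℕ → ℝ}
    (hψder : ∀ β : Fin d → ℕ, ∀ x ∈ O, ∀ i : Fin d,
      (ψ x) ^ (∑ j, β j) *
          |multiDeriv β (fun y => fderiv ℝ ψ y (EuclideanSpace.single i 1)) x|
        ≤ C (∑ j, β j))
    (l : List (Fin d)) (hl : l ≠ []) {x : EuclideanSpace ℝ (Fin d)} (hx : x ∈ O) :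
    |pfold l ψ x| ≤ C (l.length - 1) * (ψ x)⁻¹ ^ (l.length - 1) := by
  set s := l.mergeSort (fun a b => decide (a ≤ b)) with hs
  have hsorted : s.Pairwise (· ≤ ·) := List.pairwise_mergeSort' (· ≤ ·) l
  have hperm : l.Perm s := (List.mergeSort_perm l _).symm
  have h1 : pfold l ψ x = pfold s ψ x := pfold_perm hO hψsmooth hperm hx
  have hlen : s.length = l.length := hperm.length_eq.symm
  rcases List.eq_nil_or_concat s with hnil | ⟨s', b, hsb⟩
  · exact absurd (List.length_eq_zero_iff.mp (by rw [hperm.length_eq, hnil, List.length_nil])) hl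
  · rw [List.concat_eq_append] at hsb
    rw [h1, hsb, pfold_append]
    have hs'sorted : s'.Pairwise (· ≤ ·) := by
      rw [hsb] at hsorted
      exact hsorted.sublist (List.sublist_append_left s' [b])
    have hg : pfold [b] ψ = pderiv' b ψ := rfl
    rw [hg]
    set β : Fin d → ℕ := fun i => s'.count i with hβ
    have hcanon : s' = canonList β := sorted_eq_canonList hs'sorted
    have hmd : pfold s' (pderiv' b ψ) x = multiDeriv β (pderiv' b ψ) x := by
      rw [multiDeriv_eq_pfold, ← hcanon]
    have hsum : (∑ j, β j) = s'.length := by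
      have := canonList_length β
      rw [← hcanon] at this
      exact this.symm
    have hlen' : s'.length = l.length - 1 := by
      have : s'.length + 1 = l.length := by
        rw [← hlen, hsb]; simp
      omega
    have hkey := hψder β x hx b
    rw [hsum, hlen'] at hkey
    have hψx := hψpos x hx
    have hmd' : multiDeriv β (pderiv' b ψ) x =
        multiDeriv β (fun y => fderiv ℝ ψ y (EuclideanSpace.single b 1)) x := rfl
    rw [hmd, hmd']
    have hpow : (0:ℝ) < ψ x ^ (l.length - 1) := by positivity
    rw [mul_comm (ψ x ^ (l.length - 1))] at hkey
    calc |multiDeriv β (fun y => fderiv ℝ ψ y (EuclideanSpace.single b 1)) x|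
        = |multiDeriv β (fun y => fderiv ℝ ψ y (EuclideanSpace.single b 1)) x| *
            ψ x ^ (l.length - 1) * (ψ x ^ (l.length - 1))⁻¹ := by
          field_simp
      _ ≤ C (l.length - 1) * (ψ x ^ (l.length - 1))⁻¹ := by
          apply mul_le_mul_of_nonneg_right hkey (by positivity)
      _ = C (l.length - 1) * (ψ x)⁻¹ ^ (l.length - 1) := by
          rw [inv_pow]

end Stmt16

open Stmt16 in
theorem stmt_16 (d : ℕ) (hd : 0 < d) (O : Set (EuclideanSpace ℝ (Fin d)))
    (hOopen : IsOpen O) (hObdd : Bornology.IsBounded O) (hOne : O.Nonempty)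
    (N₀ : ℝ) (hN₀ : 1 ≤ N₀)
    (ψ : EuclideanSpace ℝ (Fin d) → ℝ)
    (hψpos : ∀ x ∈ O, 0 < ψ x)
    (hψsmooth : ContDiffOn ℝ (⊤ : ℕ∞) ψ O)
    (hψcomp : ∀ x ∈ O, N₀⁻¹ * Metric.infDist x (frontier O) ≤ ψ x ∧
      ψ x ≤ N₀ * Metric.infDist x (frontier O))
    (C : ℕ → ℝ)
    (hψder : ∀ β : Fin d → ℕ, ∀ x ∈ O, ∀ i : Fin d,
      (ψ x) ^ (∑ j, β j) *
          |multiDeriv β (fun y => fderiv ℝ ψ y (EuclideanSpace.single i 1)) x|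
        ≤ C (∑ j, β j))
    (ζ : ℝ → ℝ) (hζ : ContDiff ℝ (⊤ : ℕ∞) ζ) (hζc : HasCompactSupport ζ)
    (hζsupp : tsupport ζ ⊆ Set.Ioi (0 : ℝ)) :
    (∀ n : ℤ, IsCompact (tsupport (zetaN O ψ ζ n)) ∧ tsupport (zetaN O ψ ζ n) ⊆ O ∧
      ContDiffOn ℝ (⊤ : ℕ∞) (zetaN O ψ ζ n) O) ∧
    (∀ m : ℕ, ∃ Nm : ℝ, ∀ α : Fin d → ℕ, (∑ i, α i) = m → ∀ n : ℤ,
      ∀ x ∈ O, |multiDeriv α (zetaN O ψ ζ n) x| ≤ Nm * Real.exp (m * n)) := by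
  have hN₀pos : (0:ℝ) < N₀ := lt_of_lt_of_le one_pos hN₀
  by_cases hts : (tsupport ζ).Nonempty
  case neg =>
    -- `ζ` is identically zero
    have hζ0 : ∀ t, ζ t = 0 := by
      intro t
      apply image_eq_zero_of_notMem_tsupport
      intro ht
      exact hts ⟨t, ht⟩
    have hz : ∀ n : ℤ, zetaN O ψ ζ n = fun _ => (0:ℝ) := by
      intro n
      funext y
      unfold zetaN
      by_cases hy : y ∈ O
      · rw [Set.indicator_of_mem hy, hζ0]
      · rw [Set.indicator_of_notMem hy]
    constructor
    · intro n
      rw [hz n]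
      have hsupp : tsupport (fun _ : EuclideanSpace ℝ (Fin d) => (0:ℝ)) = ∅ := by
        have h1 : (Function.support fun _ : EuclideanSpace ℝ (Fin d) => (0:ℝ)) = ∅ :=
          Function.support_eq_empty_iff.mpr rfl
        unfold tsupport
        rw [h1, closure_empty]
      refine ⟨?_, ?_, ?_⟩
      · rw [hsupp]; exact isCompact_empty
      · rw [hsupp]; exact Set.empty_subset _
      · exact contDiffOn_const
    · intro m
      refine ⟨1, ?_⟩
      intro α hα n x hx
      rw [hz n, multiDeriv_eq_pfold, pfold_zero]
      simp [Real.exp_pos, (Real.exp_pos _).le]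
  case pos =>
    set a := sInf (tsupport ζ) with ha_def
    have hamem : a ∈ tsupport ζ := hζc.sInf_mem hts
    have ha : 0 < a := hζsupp hamem
    have hale : ∀ t ∈ tsupport ζ, a ≤ t := fun t ht => csInf_le hζc.bddBelow ht
    constructor
    · -- Part 1
      intro n
      set c := a * Real.exp (-(n:ℝ)) / N₀ with hc
      have hcpos : 0 < c := by
        apply div_pos (mul_pos ha (Real.exp_pos _)) hN₀pos
      set S := closure O ∩ (fun y => Metric.infDist y (frontier O)) ⁻¹' Set.Ici c with hS
      have hSclosed : IsClosed S :=
        isClosed_closure.inter (isClosed_Ici.preimage (Metric.continuous_infDist_pt _))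
      have hSsub : S ⊆ O := by
        rintro y ⟨hy1, hy2⟩
        by_contra hyO
        have hyf : y ∈ frontier O := by
          rw [frontier, hOopen.interior_eq]
          exact ⟨hy1, hyO⟩
        have : Metric.infDist y (frontier O) = 0 := Metric.infDist_zero_of_mem hyf
        rw [Set.mem_preimage, Set.mem_Ici, this] at hy2
        exact absurd hy2 hcpos.not_ge
      have hsupp : Function.support (zetaN O ψ ζ n) ⊆ S := by
        intro y hy
        have hyO : y ∈ O := by
          by_contra hyO
          apply hy
          unfold zetaN
          rw [Set.indicator_of_notMem hyO]
        have hval : zetaN O ψ ζ n y = ζ (Real.exp n * ψ y) := Set.indicator_of_mem hyO _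
        have hmem : Real.exp n * ψ y ∈ tsupport ζ := by
          apply subset_tsupport
          rw [Function.mem_support, ← hval]
          exact hy
        have h1 : a ≤ Real.exp n * ψ y := hale _ hmem
        have h2 : a * Real.exp (-(n:ℝ)) ≤ ψ y := by
          rw [Real.exp_neg]
          rw [mul_comm] at h1
          calc a * (Real.exp (n:ℝ))⁻¹ ≤ (ψ y * Real.exp (n:ℝ)) * (Real.exp (n:ℝ))⁻¹ :=
                mul_le_mul_of_nonneg_right h1 (by positivity)
            _ = ψ y := by field_simp
        have h3 : ψ y ≤ N₀ * Metric.infDist y (frontier O) := (hψcomp y hyO).2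
        refine ⟨subset_closure hyO, ?_⟩
        rw [Set.mem_preimage, Set.mem_Ici, hc]
        rw [div_le_iff₀ hN₀pos]
        calc a * Real.exp (-(n:ℝ)) ≤ ψ y := h2
          _ ≤ N₀ * Metric.infDist y (frontier O) := h3
          _ = Metric.infDist y (frontier O) * N₀ := mul_comm _ _
      have htsub : tsupport (zetaN O ψ ζ n) ⊆ S := closure_minimal hsupp hSclosed
      have hSbdd : Bornology.IsBounded S :=
        hObdd.closure.subset (Set.inter_subset_left)
      have hScomp : IsCompact S := Metric.isCompact_of_isClosed_isBounded hSclosed hSbdd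
      refine ⟨hScomp.of_isClosed_subset (isClosed_tsupport _) htsub, htsub.trans hSsub, ?_⟩
      have hfn : ContDiffOn ℝ (⊤:ℕ∞) (fun y => Real.exp n * ψ y) O :=
        contDiffOn_const.mul hψsmooth
      exact (hζ.comp_contDiffOn hfn).congr fun y hy => Set.indicator_of_mem hy _
    · -- Part 2
      intro m
      -- bound on the derivatives of ζ
      have hζb : ∀ i : ℕ, ∃ B : ℝ, 0 ≤ B ∧ ∀ t, ‖iteratedFDeriv ℝ i ζ t‖ ≤ B := by
        intro i
        obtain ⟨B, hB⟩ := (hζc.iteratedFDeriv i).exists_bound_of_continuous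
          (hζ.continuous_iteratedFDeriv (by exact_mod_cast le_top))
        exact ⟨max B 0, le_max_right _ _, fun t => (hB t).trans (le_max_left _ _)⟩
      choose B hB0 hBb using hζb
      set Cζ : ℝ := ∑ i ∈ Finset.range (m+1), B i with hCζ
      have hCζ0 : 0 ≤ Cζ := Finset.sum_nonneg fun i _ => hB0 i
      have hCle : ∀ i, i ≤ m → B i ≤ Cζ := fun i hi =>
        Finset.single_le_sum (fun j _ => hB0 j) (Finset.mem_range.2 (Nat.lt_succ_of_le hi))
      set C' : ℕ → ℝ := fun j => max (C j) 0 with hC'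
      set T : ℕ → ℝ := fun i => (d:ℝ)^i * C' (i-1) * a⁻¹^(i-1) with hT
      have hT0 : ∀ i, 0 ≤ T i := by
        intro i
        apply mul_nonneg (mul_nonneg (by positivity) (le_max_right _ _)) (by positivity)
      set K : ℝ := 1 + ∑ i ∈ Finset.range (m+1), T i with hK
      have hK1 : 1 ≤ K := by
        rw [hK]
        have : 0 ≤ ∑ i ∈ Finset.range (m+1), T i := Finset.sum_nonneg fun i _ => hT0 i
        linarith
      have hK0 : 0 < K := lt_of_lt_of_le one_pos hK1
      have hKT : ∀ i, 1 ≤ i → i ≤ m → T i ≤ K ^ i := by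
        intro i h1i him
        calc T i ≤ ∑ j ∈ Finset.range (m+1), T j :=
              Finset.single_le_sum (fun j _ => hT0 j) (Finset.mem_range.2 (Nat.lt_succ_of_le him))
          _ ≤ K := by rw [hK]; linarith
          _ ≤ K ^ i := le_self_pow₀ hK1 (by omega)
      refine ⟨(m.factorial : ℝ) * Cζ * K^m, ?_⟩
      intro α hα n x hx
      have hexp : Real.exp ((m:ℝ) * (n:ℝ)) = Real.exp (n:ℝ) ^ m := Real.exp_nat_mul _ m
      set fn : EuclideanSpace ℝ (Fin d) → ℝ := fun y => Real.exp n * ψ y with hfn_def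
      set F : EuclideanSpace ℝ (Fin d) → ℝ := ζ ∘ fn with hF_def
      have hfn : ContDiffOn ℝ (⊤:ℕ∞) fn O := contDiffOn_const.mul hψsmooth
      have hF : ContDiffOn ℝ (⊤:ℕ∞) F O := hζ.comp_contDiffOn hfn
      have hEq : Set.EqOn (zetaN O ψ ζ n) F O := fun y hy => Set.indicator_of_mem hy _
      have h0 : multiDeriv α (zetaN O ψ ζ n) x = multiDeriv α F x := by
        rw [multiDeriv_eq_pfold, multiDeriv_eq_pfold]
        exact pfold_congrOn hOopen hEq _ hx
      by_cases hmem : Real.exp n * ψ x ∈ tsupport ζ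
      case neg =>
        set U := O ∩ fn ⁻¹' (tsupport ζ)ᶜ with hU_def
        have hU : IsOpen U := hfn.continuousOn.isOpen_inter_preimage hOopen
          (isClosed_tsupport ζ).isOpen_compl
        have hxU : x ∈ U := ⟨hx, hmem⟩
        have hzero : Set.EqOn F (fun _ => (0:ℝ)) U := fun y hy =>
          image_eq_zero_of_notMem_tsupport (f := ζ) hy.2
        have hFz : multiDeriv α F x = 0 := by
          rw [multiDeriv_eq_pfold, pfold_congrOn hU hzero _ hxU, pfold_zero]
        rw [h0, hFz]
        have : (0:ℝ) ≤ (m.factorial : ℝ) * Cζ * K^m * Real.exp ((m:ℝ) * (n:ℝ)) := by positivity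
        simpa using this
      case pos =>
        have hψx := hψpos x hx
        have hain : a ≤ Real.exp n * ψ x := hale _ hmem
        have hinv : (ψ x)⁻¹ ≤ Real.exp (n:ℝ) * a⁻¹ := by
          have h1 : a / Real.exp (n:ℝ) ≤ ψ x := by
            rw [div_le_iff₀ (Real.exp_pos _)]
            rw [mul_comm] at hain
            exact hain
          have h2 : (ψ x)⁻¹ ≤ (a / Real.exp (n:ℝ))⁻¹ :=
            inv_anti₀ (div_pos ha (Real.exp_pos _)) h1
          calc (ψ x)⁻¹ ≤ (a / Real.exp (n:ℝ))⁻¹ := h2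
            _ = Real.exp (n:ℝ) * a⁻¹ := by field_simp
        have hψnorm : ∀ i : ℕ, 1 ≤ i → i ≤ m →
            ‖iteratedFDerivWithin ℝ i fn O x‖ ≤ (Real.exp (n:ℝ) * K)^i := by
          intro i h1i him
          have hsmul : iteratedFDerivWithin ℝ i fn O x =
              Real.exp (n:ℝ) • iteratedFDerivWithin ℝ i ψ O x := by
            have hfn_eq : fn = (Real.exp (n:ℝ)) • ψ := by funext y; rfl
            rw [hfn_eq]
            exact iteratedFDerivWithin_const_smul_apply
              ((hψsmooth.contDiffWithinAt hx).of_le (by exact_mod_cast (le_top : (i:ℕ∞) ≤ ⊤))) hOopen.uniqueDiffOn hx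
          rw [hsmul, norm_smul, Real.norm_eq_abs, abs_of_pos (Real.exp_pos _)]
          have hbound : ‖iteratedFDerivWithin ℝ i ψ O x‖ ≤
              (d:ℝ)^i * (C' (i-1) * (ψ x)⁻¹^(i-1)) := by
            apply norm_le_of_entries _ (by positivity)
            intro j
            have hWeq := iteratedFDerivWithin_of_isOpen (𝕜 := ℝ) (f := ψ) i hOopen hx
            rw [hWeq]
            rw [iteratedFDeriv_apply_single hOopen hψsmooth i j x hx]
            have hnil : List.ofFn j ≠ [] := by
              apply List.ne_nil_of_length_pos
              rw [List.length_ofFn]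
              omega
            have hE := entry_bound hOopen hψsmooth hψpos hψder (List.ofFn j) hnil hx
            rw [List.length_ofFn] at hE
            calc |pfold (List.ofFn j) ψ x| ≤ C (i-1) * (ψ x)⁻¹^(i-1) := hE
              _ ≤ C' (i-1) * (ψ x)⁻¹^(i-1) := by
                  apply mul_le_mul_of_nonneg_right (le_max_left _ _) (by positivity)
          calc Real.exp (n:ℝ) * ‖iteratedFDerivWithin ℝ i ψ O x‖
              ≤ Real.exp (n:ℝ) * ((d:ℝ)^i * (C' (i-1) * (ψ x)⁻¹^(i-1))) :=
                mul_le_mul_of_nonneg_left hbound (Real.exp_pos _).le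
            _ ≤ Real.exp (n:ℝ) * ((d:ℝ)^i * (C' (i-1) * (Real.exp (n:ℝ) * a⁻¹)^(i-1))) := by
                apply mul_le_mul_of_nonneg_left _ (Real.exp_pos _).le
                apply mul_le_mul_of_nonneg_left _ (by positivity)
                apply mul_le_mul_of_nonneg_left _ (le_max_right _ _)
                exact pow_le_pow_left₀ (by positivity) hinv _
            _ = (Real.exp (n:ℝ) * Real.exp (n:ℝ) ^ (i-1)) * T i := by
                rw [hT, mul_pow]
                ring
            _ = Real.exp (n:ℝ) ^ i * T i := by
                congr 1
                rw [← pow_succ']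
                congr 1
                omega
            _ ≤ Real.exp (n:ℝ) ^ i * K ^ i := by
                apply mul_le_mul_of_nonneg_left (hKT i h1i him) (by positivity)
            _ = (Real.exp (n:ℝ) * K)^i := (mul_pow _ _ _).symm
        have hm' : (canonList α).length = m := by rw [canonList_length, hα]
        have h1 : |multiDeriv α F x| ≤ ‖iteratedFDeriv ℝ m F x‖ := by
          rw [multiDeriv_eq_pfold]
          have := pfold_le_norm hOopen hF (canonList α) hx
          rwa [hm'] at this
        have h2 : iteratedFDeriv ℝ m F x = iteratedFDerivWithin ℝ m F O x :=
          (iteratedFDerivWithin_of_isOpen (𝕜 := ℝ) (f := F) m hOopen hx).symm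
        have h3 : ‖iteratedFDerivWithin ℝ m F O x‖ ≤
            (m.factorial : ℝ) * Cζ * (Real.exp (n:ℝ) * K)^m := by
          apply norm_iteratedFDerivWithin_comp_le (t := Set.univ)
            hζ.contDiffOn hfn (by exact_mod_cast le_top) uniqueDiffOn_univ
            hOopen.uniqueDiffOn (Set.mapsTo_univ _ _) hx
          · intro i hi
            rw [iteratedFDerivWithin_univ]
            exact (hBb i _).trans (hCle i hi)
          · exact hψnorm
        rw [h0]
        calc |multiDeriv α F x| ≤ ‖iteratedFDeriv ℝ m F x‖ := h1
          _ = ‖iteratedFDerivWithin ℝ m F O x‖ := by rw [h2]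
          _ ≤ (m.factorial : ℝ) * Cζ * (Real.exp (n:ℝ) * K)^m := h3
          _ = (m.factorial : ℝ) * Cζ * K^m * Real.exp ((m:ℝ) * (n:ℝ)) := by
              rw [hexp, mul_pow]
              ring
end
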